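/- There exists exactly one 4-tuple (K, L, Q, Q0) of formal power series in ℚ[[t]] satisfying the system: K = t + t·L·Q0; L = 1 + L·Q; Q = 2t·L + t·L·(Q + 2·Q0 − 2·K); Q0 = t·L + t·L·(2·Q0 − K). Moreover, the series L of this unique solution satisfies the cubic equation t²·L³ + t·(t−4)·L² + (2t+1)·L − 1 = 0 in ℚ[[t]]. -/

import Mathlib

open PowerSeries

/-- The system (17) of the paper (prime decomposition, `k = 1`, after the
0/1 symmetry): `K = t + t L Q₀`, `L = 1 + L Q`,
`Q = 2t L + t L (Q + 2Q₀ − 2K)`, `Q₀ = t L + t L (2Q₀ − K)`. -/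
def SysLp1 (K L Q Q0 : PowerSeries ℚ) : Prop :=
  K = X + X * L * Q0 ∧
  L = 1 + L * Q ∧
  Q = 2 * X * L + X * L * (Q + 2 * Q0 - 2 * K) ∧
  Q0 = X * L + X * L * (2 * Q0 - K)

/-!
Eliminating `K`, `Q₀` and `Q` in turn shows that every solution satisfies
`K (1 - tL)² = t (1 - 2tL + tL²)`, `Q₀ (1 - tL)² = tL (1 - t)`, `Q (1 - tL)² = 2tL (1 - t)`,
and then `L = 1 + LQ` becomes the cubic. Since `(1 - tL)²` is a unit, a solution is determined
by `L`, and `L` is determined by the cubic, whose difference quotient has constant term `1`.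
For existence, `M = L⁻¹` satisfies the monic cubic `M³ - (2t+1)M² - t(t-4)M - t² = 0`,
which modulo `t` is `M²(M - 1)` with the simple root `1`; Hensel's lemma in the
`t`-adically complete ring `R⟦t⟧` lifts it.
-/

section CubicRoot

variable {R : Type*} [CommRing R]

theorem exists_reversed_cubic_root :
    ∃ M : R⟦X⟧, M ^ 3 - (2 * X + 1) * M ^ 2 - X * (X - 4) * M - X ^ 2 = 0 ∧
      constantCoeff M = 1 := by
  let f : Polynomial R⟦X⟧ := Polynomial.X ^ 3 - Polynomial.C (2 * X + 1) * Polynomial.X ^ 2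
    - Polynomial.C (X * (X - 4)) * Polynomial.X - Polynomial.C (X ^ 2)
  have hmonic : f.Monic := by
    simp only [f]
    monicity!
  have hf : f.eval 1 = X * (2 * (1 - X)) := by simp [f]; ring
  have hf' : f.derivative.eval 1 = 1 - X ^ 2 := by simp [f, Polynomial.derivative_pow]; ring
  obtain ⟨M, hM, hM1⟩ := HenselianRing.is_henselian (I := Ideal.span {X}) f hmonic 1
    (by rw [hf]; exact Ideal.mem_span_singleton.mpr (dvd_mul_right _ _))
    (by rw [hf']; exact (isUnit_iff_constantCoeff.mpr (by simp)).map _)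
  refine ⟨M, by simpa [f] using hM, ?_⟩
  rw [Ideal.mem_span_singleton, X_dvd_iff, map_sub, sub_eq_zero] at hM1
  simpa using hM1

theorem exists_cubic_root :
    ∃ L : R⟦X⟧, X ^ 2 * L ^ 3 + X * (X - 4) * L ^ 2 + (2 * X + 1) * L - 1 = 0 := by
  obtain ⟨M, hM, hM1⟩ := exists_reversed_cubic_root (R := R)
  obtain ⟨u, rfl⟩ : IsUnit M := isUnit_iff_constantCoeff.mpr (by simp [hM1])
  refine ⟨↑u⁻¹, ?_⟩
  set L : R⟦X⟧ := ↑u⁻¹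
  have hLM : L * u = 1 := u.inv_mul
  linear_combination (-L ^ 3) * hM
    + (L ^ 2 * u ^ 2 + L * u + 1 - (2 * X + 1) * L * (L * u + 1) - X * (X - 4) * L ^ 2) * hLM

theorem cubic_root_unique {L L' : R⟦X⟧}
    (h : X ^ 2 * L ^ 3 + X * (X - 4) * L ^ 2 + (2 * X + 1) * L - 1 = 0)
    (h' : X ^ 2 * L' ^ 3 + X * (X - 4) * L' ^ 2 + (2 * X + 1) * L' - 1 = 0) : L = L' := by
  have hu : IsUnit (X ^ 2 * (L ^ 2 + L * L' + L' ^ 2) + X * (X - 4) * (L + L') + (2 * X + 1)) :=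
    isUnit_iff_constantCoeff.mpr (by simp)
  rw [← sub_eq_zero, ← hu.mul_right_eq_zero]
  linear_combination h - h'

end CubicRoot

namespace SysLp1

variable {K L Q Q0 : PowerSeries ℚ}

theorem K_mul_sq (h : SysLp1 K L Q Q0) :
    K * (1 - X * L) ^ 2 = X * (1 - 2 * X * L + X * L ^ 2) := by
  obtain ⟨hK, -, -, hQ0⟩ := h
  linear_combination (1 - 2 * X * L) * hK + X * L * hQ0

theorem Q0_mul_sq (h : SysLp1 K L Q Q0) : Q0 * (1 - X * L) ^ 2 = X * L * (1 - X) := by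
  have hu : IsUnit (1 - 2 * X * L) := isUnit_iff_constantCoeff.mpr (by simp)
  apply hu.mul_left_cancel
  linear_combination (1 - X * L) ^ 2 * h.2.2.2 - X * L * h.K_mul_sq

theorem Q_mul_sq (h : SysLp1 K L Q Q0) : Q * (1 - X * L) ^ 2 = 2 * X * L * (1 - X) := by
  have hu : IsUnit (1 - X * L) := isUnit_iff_constantCoeff.mpr (by simp)
  apply hu.mul_left_cancel
  linear_combination (1 - X * L) ^ 2 * h.2.2.1 + 2 * X * L * h.Q0_mul_sq - 2 * X * L * h.K_mul_sq

theorem cubic (h : SysLp1 K L Q Q0) :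
    X ^ 2 * L ^ 3 + X * (X - 4) * L ^ 2 + (2 * X + 1) * L - 1 = 0 := by
  linear_combination (1 - X * L) ^ 2 * h.2.1 + L * h.Q_mul_sq

theorem eq_of_L_eq {K' L' Q' Q0' : PowerSeries ℚ} (h : SysLp1 K L Q Q0)
    (h' : SysLp1 K' L' Q' Q0') (hL : L = L') : K = K' ∧ Q = Q' ∧ Q0 = Q0' := by
  subst hL
  have hu : IsUnit ((1 - X * L) ^ 2) := isUnit_iff_constantCoeff.mpr (by simp)
  refine ⟨hu.mul_right_cancel ?_, hu.mul_right_cancel ?_, hu.mul_right_cancel ?_⟩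
  · rw [h.K_mul_sq, h'.K_mul_sq]
  · rw [h.Q_mul_sq, h'.Q_mul_sq]
  · rw [h.Q0_mul_sq, h'.Q0_mul_sq]

theorem of_cubic {w : PowerSeries ℚ}
    (hL : X ^ 2 * L ^ 3 + X * (X - 4) * L ^ 2 + (2 * X + 1) * L - 1 = 0)
    (hw : (1 - X * L) ^ 2 * w = 1) :
    SysLp1 (X * (1 - 2 * X * L + X * L ^ 2) * w) L (2 * X * L * (1 - X) * w)
      (X * L * (1 - X) * w) := by
  refine ⟨?_, ?_, ?_, ?_⟩
  · linear_combination X * hw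
  · linear_combination w * hL + (1 - L) * hw
  · linear_combination 2 * X * L * hw
  · linear_combination X * L * hw

end SysLp1

/-- There is exactly one 4-tuple `(K, L, Q, Q₀)` of power series in `ℚ[[t]]`
satisfying the system `SysLp1`, and the series `L` of this solution satisfies
the cubic equation (18) of the paper:
`t² L³ + t(t−4) L² + (2t+1) L − 1 = 0`. -/
theorem sysLp1_unique_and_cubic :
    (∃! v : PowerSeries ℚ × PowerSeries ℚ × PowerSeries ℚ × PowerSeries ℚ,
      SysLp1 v.1 v.2.1 v.2.2.1 v.2.2.2) ∧
    (∀ K L Q Q0 : PowerSeries ℚ, SysLp1 K L Q Q0 →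
      X ^ 2 * L ^ 3 + X * (X - 4) * L ^ 2 + (2 * X + 1) * L - 1 = 0) := by
  refine ⟨?_, fun K L Q Q0 h => h.cubic⟩
  obtain ⟨L, hL⟩ := exists_cubic_root (R := ℚ)
  have hsol := SysLp1.of_cubic hL (PowerSeries.mul_inv_cancel ((1 - X * L) ^ 2) (by simp))
  refine ⟨(_, L, _, _), hsol, ?_⟩
  rintro ⟨K', L', Q', Q0'⟩ h'
  have hL' : L' = L := cubic_root_unique h'.cubic hL
  obtain ⟨rfl, rfl, rfl⟩ := h'.eq_of_L_eq hsol hL'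
  rw [hL']
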